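/- The images of the ordered monomials u₁^a u₂^b u₃^c (a, b, c ∈ ℕ) form a basis of the quotient algebra A_E as a ℂ-vector space. -/
import Mathlib

noncomputable section

def excRel (q : ℂ) : FreeAlgebra ℂ (Fin 3) → FreeAlgebra ℂ (Fin 3) → Prop :=
  fun a b =>
    (a = FreeAlgebra.ι ℂ 1 * FreeAlgebra.ι ℂ 0 ∧ b = 0) ∨
    (a = (q ^ 2) • (FreeAlgebra.ι ℂ 2 * FreeAlgebra.ι ℂ 0) -
        FreeAlgebra.ι ℂ 0 * FreeAlgebra.ι ℂ 2 -
        FreeAlgebra.ι ℂ 0 * FreeAlgebra.ι ℂ 1 ∧ b = 0) ∨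
    (a = (q ^ 2) • (FreeAlgebra.ι ℂ 2 * FreeAlgebra.ι ℂ 1) -
        FreeAlgebra.ι ℂ 1 * FreeAlgebra.ι ℂ 2 +
        FreeAlgebra.ι ℂ 0 * FreeAlgebra.ι ℂ 1 ∧ b = 0)

namespace ExcAux

abbrev V : Type := (ℕ × ℕ × ℕ) →₀ ℂ

def e (p : ℕ × ℕ × ℕ) : V := Finsupp.single p 1

variable (q : ℂ)

def sc : ℂ := (q ^ 2)⁻¹

lemma hqs (hq : q ≠ 0) : q ^ 2 * sc q = 1 := mul_inv_cancel₀ (pow_ne_zero 2 hq)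

lemma hqsp (hq : q ≠ 0) (n : ℕ) : q ^ 2 * sc q ^ (n + 1) = sc q ^ n := by
  have h1 : q ^ 2 * sc q ^ (n + 1) = (q ^ 2 * sc q) * sc q ^ n := by ring
  rw [h1, hqs q hq, one_mul]

lemma hqsp1 (hq : q ≠ 0) (n : ℕ) : q ^ 2 * sc q ^ (1 + n) = sc q ^ n := by
  rw [add_comm]; exact hqsp q hq n

/-! ### The representation on `V` -/

def f0 (p : ℕ × ℕ × ℕ) : V := e (p.1 + 1, p.2.1, p.2.2)
def f1 (p : ℕ × ℕ × ℕ) : V := if p.1 = 0 then e (p.1, p.2.1 + 1, p.2.2) else 0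
def f2 (p : ℕ × ℕ × ℕ) : V :=
  sc q ^ (p.1 + p.2.1) • e (p.1, p.2.1, p.2.2 + 1)
  + (if p.1 = 0 then 0 else sc q ^ p.1 • e (p.1, p.2.1 + 1, p.2.2))
  - (if p.2.1 = 0 then 0 else sc q ^ (p.1 + 1) • e (p.1 + 1, p.2.1, p.2.2))

def mkL (g : (ℕ × ℕ × ℕ) → V) : Module.End ℂ V :=
  Finsupp.lsum ℂ fun p => LinearMap.toSpanSingleton ℂ V (g p)

lemma mkL_e (g : (ℕ × ℕ × ℕ) → V) (p : ℕ × ℕ × ℕ) : mkL g (e p) = g p := by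
  simp [mkL, e, LinearMap.toSpanSingleton_apply]

lemma basis_eq_e (p : ℕ × ℕ × ℕ) :
    (Finsupp.basisSingleOne (R := ℂ) (ι := ℕ × ℕ × ℕ)) p = e p := by
  simp [e, Finsupp.coe_basisSingleOne]

lemma opE1 : mkL f1 * mkL f0 = 0 := by
  apply (Finsupp.basisSingleOne (R := ℂ) (ι := ℕ × ℕ × ℕ)).ext
  intro p
  rw [basis_eq_e]
  simp [Module.End.mul_apply, mkL_e, f0, f1]

lemma opE2 (hq : q ≠ 0) :
    q ^ 2 • (mkL (f2 q) * mkL f0) = mkL f0 * mkL (f2 q) + mkL f0 * mkL f1 := by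
  apply (Finsupp.basisSingleOne (R := ℂ) (ι := ℕ × ℕ × ℕ)).ext
  intro p
  obtain ⟨a, b, c⟩ := p
  rw [basis_eq_e]
  simp only [LinearMap.smul_apply, Module.End.mul_apply, LinearMap.add_apply]
  rcases eq_or_ne a 0 with ha | ha <;> rcases eq_or_ne b 0 with hb | hb <;>
    simp [f0, f1, f2, mkL_e, smul_add, smul_sub, smul_smul, ha, hb,
      add_right_comm, hqsp q hq, hqsp1 q hq, hqs q hq] <;>
    abel

lemma opE3 (hq : q ≠ 0) :
    q ^ 2 • (mkL (f2 q) * mkL f1) = mkL f1 * mkL (f2 q) - mkL f0 * mkL f1 := by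
  apply (Finsupp.basisSingleOne (R := ℂ) (ι := ℕ × ℕ × ℕ)).ext
  intro p
  obtain ⟨a, b, c⟩ := p
  rw [basis_eq_e]
  simp only [LinearMap.smul_apply, Module.End.mul_apply, LinearMap.sub_apply]
  rcases eq_or_ne a 0 with ha | ha <;> rcases eq_or_ne b 0 with hb | hb <;>
    simp [f0, f1, f2, mkL_e, smul_add, smul_sub, smul_smul, ha, hb,
      add_right_comm, hqsp q hq, hqsp1 q hq, hqs q hq] <;>
    abel

def L : Fin 3 → Module.End ℂ V
  | 0 => mkL f0
  | 1 => mkL f1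
  | 2 => mkL (f2 q)

def φ : FreeAlgebra ℂ (Fin 3) →ₐ[ℂ] Module.End ℂ V := FreeAlgebra.lift ℂ (L q)

lemma φ_ι (i : Fin 3) : φ q (FreeAlgebra.ι ℂ i) = L q i := by
  simp [φ]

lemma φ_rel (hq : q ≠ 0) : ∀ a b, excRel q a b → φ q a = φ q b := by
  rintro a b (⟨rfl, rfl⟩ | ⟨rfl, rfl⟩ | ⟨rfl, rfl⟩)
  · rw [map_mul, map_zero, φ_ι, φ_ι]
    exact opE1
  · rw [map_zero, map_sub, map_sub, map_smul, map_mul, map_mul, map_mul, φ_ι, φ_ι, φ_ι,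
      sub_sub, sub_eq_zero]
    exact opE2 q hq
  · rw [map_zero, map_add, map_sub, map_smul, map_mul, map_mul, map_mul, φ_ι, φ_ι, φ_ι,
      sub_add, sub_eq_zero]
    exact opE3 q hq

def ψ (hq : q ≠ 0) : RingQuot (excRel q) →ₐ[ℂ] Module.End ℂ V :=
  RingQuot.liftAlgHom ℂ ⟨φ q, φ_rel q hq⟩

lemma ψ_mk (hq : q ≠ 0) (x : FreeAlgebra ℂ (Fin 3)) :
    ψ q hq (RingQuot.mkAlgHom ℂ (excRel q) x) = φ q x := by
  rw [ψ, RingQuot.liftAlgHom_mkAlgHom_apply]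

/-! ### Evaluation at the vacuum vector -/

lemma L0pow : ∀ (n : ℕ) (a b c : ℕ), ((mkL f0) ^ n) (e (a, b, c)) = e (a + n, b, c)
  | 0, a, b, c => by simp [e]
  | n + 1, a, b, c => by
    rw [pow_succ', Module.End.mul_apply, L0pow n, mkL_e]
    rfl

lemma L1pow : ∀ (n : ℕ) (b c : ℕ), ((mkL f1) ^ n) (e (0, b, c)) = e (0, b + n, c)
  | 0, b, c => by simp [e]
  | n + 1, b, c => by
    rw [pow_succ', Module.End.mul_apply, L1pow n, mkL_e]
    simp [f1]
    rfl

lemma L2pow : ∀ (n : ℕ) (c : ℕ), ((mkL (f2 q)) ^ n) (e (0, 0, c)) = e (0, 0, c + n)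
  | 0, c => by simp [e]
  | n + 1, c => by
    rw [pow_succ', Module.End.mul_apply, L2pow n, mkL_e]
    simp [f2]
    rfl

lemma key (hq : q ≠ 0) (a b c : ℕ) :
    ψ q hq (RingQuot.mkAlgHom ℂ (excRel q)
        (FreeAlgebra.ι ℂ 0 ^ a * FreeAlgebra.ι ℂ 1 ^ b * FreeAlgebra.ι ℂ 2 ^ c))
      (e (0, 0, 0)) = e (a, b, c) := by
  rw [ψ_mk, map_mul, map_mul, map_pow, map_pow, map_pow, φ_ι, φ_ι, φ_ι]
  show (L q 0 ^ a * L q 1 ^ b * L q 2 ^ c) (e (0, 0, 0)) = e (a, b, c)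
  rw [Module.End.mul_apply, Module.End.mul_apply]
  have h0 : L q 0 = mkL f0 := rfl
  have h1 : L q 1 = mkL f1 := rfl
  have h2 : L q 2 = mkL (f2 q) := rfl
  rw [h0, h1, h2, L2pow, L1pow, L0pow]
  simp [e]

/-! ### Quotient algebra side -/

def u (i : Fin 3) : RingQuot (excRel q) := RingQuot.mkAlgHom ℂ (excRel q) (FreeAlgebra.ι ℂ i)

def m (a b c : ℕ) : RingQuot (excRel q) := u q 0 ^ a * u q 1 ^ b * u q 2 ^ c

def M : Submodule ℂ (RingQuot (excRel q)) :=
  Submodule.span ℂ (Set.range fun abc : ℕ × ℕ × ℕ => m q abc.1 abc.2.1 abc.2.2)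

lemma m_mem (a b c : ℕ) : m q a b c ∈ M q := Submodule.subset_span ⟨(a, b, c), rfl⟩

lemma R1 : u q 1 * u q 0 = 0 := by
  have h : excRel q (FreeAlgebra.ι ℂ 1 * FreeAlgebra.ι ℂ 0) 0 := Or.inl ⟨rfl, rfl⟩
  have h2 := RingQuot.mkAlgHom_rel ℂ h
  rw [map_mul, map_zero] at h2
  exact h2

lemma R2 : q ^ 2 • (u q 2 * u q 0) = u q 0 * u q 2 + u q 0 * u q 1 := by
  have h : excRel q ((q ^ 2) • (FreeAlgebra.ι ℂ 2 * FreeAlgebra.ι ℂ 0) -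
      FreeAlgebra.ι ℂ 0 * FreeAlgebra.ι ℂ 2 -
      FreeAlgebra.ι ℂ 0 * FreeAlgebra.ι ℂ 1) 0 := Or.inr (Or.inl ⟨rfl, rfl⟩)
  have h2 := RingQuot.mkAlgHom_rel ℂ h
  rw [map_zero, map_sub, map_sub, map_smul, map_mul, map_mul, map_mul, sub_sub,
    sub_eq_zero] at h2
  exact h2

lemma R3 : q ^ 2 • (u q 2 * u q 1) = u q 1 * u q 2 - u q 0 * u q 1 := by
  have h : excRel q ((q ^ 2) • (FreeAlgebra.ι ℂ 2 * FreeAlgebra.ι ℂ 1) -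
      FreeAlgebra.ι ℂ 1 * FreeAlgebra.ι ℂ 2 +
      FreeAlgebra.ι ℂ 0 * FreeAlgebra.ι ℂ 1) 0 := Or.inr (Or.inr ⟨rfl, rfl⟩)
  have h2 := RingQuot.mkAlgHom_rel ℂ h
  rw [map_zero, map_add, map_sub, map_smul, map_mul, map_mul, map_mul, sub_add,
    sub_eq_zero] at h2
  exact h2

lemma sR2 (hq : q ≠ 0) : u q 2 * u q 0 = sc q • (u q 0 * u q 2 + u q 0 * u q 1) := by
  have h2 : sc q • (q ^ 2 • (u q 2 * u q 0)) = sc q • (u q 0 * u q 2 + u q 0 * u q 1) := by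
    rw [R2]
  rwa [smul_smul, mul_comm (sc q) (q ^ 2), hqs q hq, one_smul] at h2

lemma sR3 (hq : q ≠ 0) : u q 2 * u q 1 = sc q • (u q 1 * u q 2 - u q 0 * u q 1) := by
  have h2 : sc q • (q ^ 2 • (u q 2 * u q 1)) = sc q • (u q 1 * u q 2 - u q 0 * u q 1) := by
    rw [R3]
  rwa [smul_smul, mul_comm (sc q) (q ^ 2), hqs q hq, one_smul] at h2

lemma D1b (b : ℕ) : u q 1 ^ (b + 1) * u q 0 = 0 := by
  rw [pow_succ, mul_assoc, R1, mul_zero]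

lemma D20 (hq : q ≠ 0) : ∀ a : ℕ,
    u q 2 * u q 0 ^ (a + 1)
      = sc q ^ (a + 1) • (u q 0 ^ (a + 1) * u q 2 + u q 0 ^ (a + 1) * u q 1)
  | 0 => by
    rw [pow_one, pow_one, sR2 q hq]
  | a + 1 => by
    have ih := D20 hq a
    calc u q 2 * u q 0 ^ (a + 1 + 1)
        = (u q 2 * u q 0 ^ (a + 1)) * u q 0 := by rw [pow_succ, ← mul_assoc]
      _ = sc q ^ (a + 1) • ((u q 0 ^ (a + 1) * u q 2 + u q 0 ^ (a + 1) * u q 1) * u q 0) := by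
          rw [ih, smul_mul_assoc]
      _ = sc q ^ (a + 1) • (u q 0 ^ (a + 1) * (u q 2 * u q 0)) := by
          rw [add_mul, mul_assoc, mul_assoc, R1, mul_zero, add_zero]
      _ = sc q ^ (a + 1 + 1) • (u q 0 ^ (a + 1 + 1) * u q 2 + u q 0 ^ (a + 1 + 1) * u q 1) := by
          rw [sR2 q hq, mul_smul_comm, smul_smul, ← pow_succ, mul_add,
            ← mul_assoc, ← mul_assoc, ← pow_succ]

lemma D21 (hq : q ≠ 0) : ∀ b : ℕ,
    u q 2 * u q 1 ^ (b + 1)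
      = sc q ^ (b + 1) • (u q 1 ^ (b + 1) * u q 2) - sc q • (u q 0 * u q 1 ^ (b + 1))
  | 0 => by
    rw [pow_one, pow_one, sR3 q hq, smul_sub]
  | b + 1 => by
    have ih := D21 hq b
    calc u q 2 * u q 1 ^ (b + 1 + 1)
        = (u q 2 * u q 1 ^ (b + 1)) * u q 1 := by rw [pow_succ, ← mul_assoc]
      _ = sc q ^ (b + 1) • (u q 1 ^ (b + 1) * (u q 2 * u q 1))
            - sc q • (u q 0 * u q 1 ^ (b + 1 + 1)) := by
          rw [ih, sub_mul, smul_mul_assoc, smul_mul_assoc, mul_assoc, mul_assoc, ← pow_succ]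
      _ = sc q ^ (b + 1 + 1) • (u q 1 ^ (b + 1 + 1) * u q 2)
            - sc q • (u q 0 * u q 1 ^ (b + 1 + 1)) := by
          rw [sR3 q hq, mul_smul_comm, smul_smul, ← pow_succ, mul_sub, ← mul_assoc,
            ← mul_assoc, D1b, zero_mul, sub_zero, ← pow_succ]

lemma D10x (a : ℕ) (x : RingQuot (excRel q)) : u q 1 * (u q 0 ^ (a + 1) * x) = 0 := by
  rw [← mul_assoc, pow_succ', ← mul_assoc, R1, zero_mul, zero_mul]

lemma D20x (hq : q ≠ 0) (a : ℕ) (x : RingQuot (excRel q)) :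
    u q 2 * (u q 0 ^ (a + 1) * x)
      = sc q ^ (a + 1) • (u q 0 ^ (a + 1) * (u q 2 * x))
        + sc q ^ (a + 1) • (u q 0 ^ (a + 1) * (u q 1 * x)) := by
  rw [← mul_assoc, D20 q hq a, smul_mul_assoc, add_mul, mul_assoc, mul_assoc, smul_add]

lemma D21x (hq : q ≠ 0) (b : ℕ) (x : RingQuot (excRel q)) :
    u q 2 * (u q 1 ^ (b + 1) * x)
      = sc q ^ (b + 1) • (u q 1 ^ (b + 1) * (u q 2 * x))
        - sc q • (u q 0 * (u q 1 ^ (b + 1) * x)) := by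
  rw [← mul_assoc, D21 q hq b, sub_mul, smul_mul_assoc, smul_mul_assoc, mul_assoc, mul_assoc]

lemma hm_assoc (a b c : ℕ) : u q 0 ^ a * (u q 1 ^ b * u q 2 ^ c) ∈ M q := by
  have := m_mem q a b c
  rwa [m, mul_assoc] at this

lemma memM0 (a b c : ℕ) : u q 0 * m q a b c ∈ M q := by
  rw [m, mul_assoc, ← mul_assoc, ← pow_succ']
  exact hm_assoc q (a + 1) b c

lemma memM1 (a b c : ℕ) : u q 1 * m q a b c ∈ M q := by
  rw [m, mul_assoc]
  cases a with
  | zero =>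
    rw [pow_zero, one_mul, ← mul_assoc, ← pow_succ']
    simpa using hm_assoc q 0 (b + 1) c
  | succ a =>
    rw [D10x]
    exact zero_mem _

lemma memM2 (hq : q ≠ 0) (a b c : ℕ) : u q 2 * m q a b c ∈ M q := by
  rw [m, mul_assoc]
  cases a with
  | zero =>
    rw [pow_zero, one_mul]
    cases b with
    | zero =>
      rw [pow_zero, one_mul, ← pow_succ']
      simpa using hm_assoc q 0 0 (c + 1)
    | succ b =>
      rw [D21x q hq, ← pow_succ']
      refine sub_mem (Submodule.smul_mem _ _ ?_) (Submodule.smul_mem _ _ ?_)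
      · simpa using hm_assoc q 0 (b + 1) (c + 1)
      · have := hm_assoc q 1 (b + 1) c
        rwa [pow_one] at this
  | succ a =>
    rw [D20x q hq]
    refine add_mem (Submodule.smul_mem _ _ ?_) (Submodule.smul_mem _ _ ?_)
    · cases b with
      | zero =>
        rw [pow_zero, one_mul, ← pow_succ']
        simpa using hm_assoc q (a + 1) 0 (c + 1)
      | succ b =>
        rw [D21x q hq, ← pow_succ']
        have h1 : u q 0 ^ (a + 1) * (u q 0 * (u q 1 ^ (b + 1) * u q 2 ^ c))
            = u q 0 ^ (a + 2) * (u q 1 ^ (b + 1) * u q 2 ^ c) := by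
          rw [← mul_assoc, ← pow_succ]
        rw [mul_sub, mul_smul_comm, mul_smul_comm, h1]
        refine sub_mem (Submodule.smul_mem _ _ ?_) (Submodule.smul_mem _ _ ?_)
        · exact hm_assoc q (a + 1) (b + 1) (c + 1)
        · exact hm_assoc q (a + 2) (b + 1) c
    · rw [← mul_assoc (u q 1), ← pow_succ']
      exact hm_assoc q (a + 1) (b + 1) c

lemma mulu_mem (hq : q ≠ 0) (i : Fin 3) {x : RingQuot (excRel q)} (hx : x ∈ M q) :
    u q i * x ∈ M q := by
  induction hx using Submodule.span_induction with
  | mem y hy =>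
    obtain ⟨⟨a, b, c⟩, rfl⟩ := hy
    fin_cases i
    · exact memM0 q a b c
    · exact memM1 q a b c
    · exact memM2 q hq a b c
  | zero => rw [mul_zero]; exact zero_mem _
  | add x y _ _ ihx ihy => rw [mul_add]; exact add_mem ihx ihy
  | smul c x _ ihx => rw [mul_smul_comm]; exact Submodule.smul_mem _ _ ihx

lemma mulπ_mem (hq : q ≠ 0) (x : FreeAlgebra ℂ (Fin 3)) :
    ∀ y ∈ M q, RingQuot.mkAlgHom ℂ (excRel q) x * y ∈ M q := by
  induction x using FreeAlgebra.induction with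
  | grade0 r =>
    intro y hy
    rw [AlgHom.commutes, ← Algebra.smul_def]
    exact Submodule.smul_mem _ _ hy
  | grade1 i =>
    intro y hy
    exact mulu_mem q hq i hy
  | mul a b iha ihb =>
    intro y hy
    rw [map_mul, mul_assoc]
    exact iha _ (ihb _ hy)
  | add a b iha ihb =>
    intro y hy
    rw [map_add, add_mul]
    exact add_mem (iha _ hy) (ihb _ hy)

lemma one_mem_M : (1 : RingQuot (excRel q)) ∈ M q := by
  simpa [m] using m_mem q 0 0 0

lemma M_top (hq : q ≠ 0) : M q = ⊤ := by
  rw [Submodule.eq_top_iff']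
  intro x
  obtain ⟨y, rfl⟩ := RingQuot.mkAlgHom_surjective ℂ (excRel q) x
  simpa using mulπ_mem q hq y 1 (one_mem_M q)

def T (hq : q ≠ 0) : RingQuot (excRel q) →ₗ[ℂ] V where
  toFun x := ψ q hq x (e (0, 0, 0))
  map_add' x y := by
    show ψ q hq (x + y) (e (0, 0, 0)) = ψ q hq x (e (0, 0, 0)) + ψ q hq y (e (0, 0, 0))
    rw [map_add]; rfl
  map_smul' c x := by
    show ψ q hq (c • x) (e (0, 0, 0)) = c • ψ q hq x (e (0, 0, 0))
    rw [map_smul]; rfl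

end ExcAux

open ExcAux in
/-- Proposition 8: the ordered monomials `u₁^a u₂^b u₃^c` form a ℂ-basis of the
exceptional quotient algebra `A_E`. -/
theorem exceptional_ordered_monomials_basis (q : ℂ) (hq : q ≠ 0) :
    LinearIndependent ℂ
        (fun abc : ℕ × ℕ × ℕ =>
          RingQuot.mkAlgHom ℂ (excRel q)
            (FreeAlgebra.ι ℂ 0 ^ abc.1 * FreeAlgebra.ι ℂ 1 ^ abc.2.1 *
              FreeAlgebra.ι ℂ 2 ^ abc.2.2)) ∧
      Submodule.span ℂ
          (Set.range
            (fun abc : ℕ × ℕ × ℕ =>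
              RingQuot.mkAlgHom ℂ (excRel q)
                (FreeAlgebra.ι ℂ 0 ^ abc.1 * FreeAlgebra.ι ℂ 1 ^ abc.2.1 *
                  FreeAlgebra.ι ℂ 2 ^ abc.2.2))) = ⊤ := by
  have hfun : (fun abc : ℕ × ℕ × ℕ =>
      RingQuot.mkAlgHom ℂ (excRel q)
        (FreeAlgebra.ι ℂ 0 ^ abc.1 * FreeAlgebra.ι ℂ 1 ^ abc.2.1 *
          FreeAlgebra.ι ℂ 2 ^ abc.2.2))
      = fun abc : ℕ × ℕ × ℕ => m q abc.1 abc.2.1 abc.2.2 := by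
    funext abc
    simp [m, u, map_mul, map_pow]
  constructor
  · -- linear independence
    apply LinearIndependent.of_comp (T q hq)
    have hcomp : (T q hq ∘ fun abc : ℕ × ℕ × ℕ =>
        RingQuot.mkAlgHom ℂ (excRel q)
          (FreeAlgebra.ι ℂ 0 ^ abc.1 * FreeAlgebra.ι ℂ 1 ^ abc.2.1 *
            FreeAlgebra.ι ℂ 2 ^ abc.2.2)) = fun abc : ℕ × ℕ × ℕ => e abc := by
      funext abc
      obtain ⟨a, b, c⟩ := abc
      exact key q hq a b c
    rw [hcomp]
    have := (Finsupp.basisSingleOne (R := ℂ) (ι := ℕ × ℕ × ℕ)).linearIndependent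
    simpa [e, Finsupp.coe_basisSingleOne] using this
  · rw [hfun]
    exact M_top q hq
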